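/- arXiv:1603.05676 — 2 statements merged into one kernel-verified Lean document; each statement's English description precedes it below -/
import Mathlib

section
/- The map exp : ẑ × ℝ → S¹_ℚ, exp(a, θ) = φ(a)·ν(θ), is a local homeomorphism, and π₁ : S¹_ℚ → S¹ is a fiber bundle with fiber homeomorphic to ẑ; in particular π₁ admits local trivializations over every open arc of S¹ of arclength less than 2π. -/
open Complex Real Filter MeasureTheory

noncomputable section

/-- The profinite completion of `ℤ`: the inverse limit of the groups `ZMod n`
over the divisibility order. -/
def Zhat : Type :=
  {a : (n : ℕ+) → ZMod n //
    ∀ (n k : ℕ+), ZMod.castHom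
        (show ((n : ℕ+) : ℕ) ∣ ((n * k : ℕ+) : ℕ) by
          rw [PNat.mul_coe]; exact dvd_mul_right _ _)
        (ZMod n) (a (n * k)) = a n}

instance (n : ℕ) : TopologicalSpace (ZMod n) := ⊥

instance : TopologicalSpace Zhat := by unfold Zhat; infer_instance

instance : MeasurableSpace Zhat := borel _

instance : Zero Zhat := ⟨⟨fun _ => 0, fun _ _ => map_zero _⟩⟩

instance : Add Zhat :=
  ⟨fun a b => ⟨fun n => a.1 n + b.1 n, fun n k => by rw [map_add, a.2 n k, b.2 n k]⟩⟩

/-- The canonical inclusion `ℤ → ẑ`. -/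
def iotaZ (k : ℤ) : Zhat := ⟨fun n => (k : ZMod n), fun n m => by rw [map_intCast]⟩

/-- Multiplication by a natural number on `ẑ`. -/
def nsmulZ (c : ℕ) (a : Zhat) : Zhat :=
  ⟨fun n => (c : ZMod n) * a.1 n, fun n k => by rw [map_mul, map_natCast, a.2 n k]⟩

lemma exp_real_mul_I_norm (θ : ℝ) : ‖Complex.exp ((θ : ℂ) * Complex.I)‖ = 1 := by
  rw [Complex.norm_exp_ofReal_mul_I]

lemma exp_div_pow (θ : ℝ) (n k : ℕ+) :
    Complex.exp (((θ / (((n * k : ℕ+) : ℕ)) : ℝ) : ℂ) * Complex.I) ^ ((k : ℕ+) : ℕ)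
      = Complex.exp (((θ / ((n : ℕ+) : ℕ) : ℝ) : ℂ) * Complex.I) := by
  rw [← Complex.exp_nat_mul]
  congr 1
  have hn : (((n : ℕ+) : ℕ) : ℂ) ≠ 0 := by exact_mod_cast n.ne_zero
  have hk : (((k : ℕ+) : ℕ) : ℂ) ≠ 0 := by exact_mod_cast k.ne_zero
  rw [PNat.mul_coe]
  push_cast
  field_simp

lemma exp_div_powC (w : ℂ) (n k : ℕ+) :
    Complex.exp (w / (((n * k : ℕ+) : ℕ) : ℂ)) ^ ((k : ℕ+) : ℕ)
      = Complex.exp (w / (((n : ℕ+) : ℕ) : ℂ)) := by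
  rw [← Complex.exp_nat_mul]
  congr 1
  have hn : (((n : ℕ+) : ℕ) : ℂ) ≠ 0 := by exact_mod_cast n.ne_zero
  have hk : (((k : ℕ+) : ℕ) : ℂ) ≠ 0 := by exact_mod_cast k.ne_zero
  rw [PNat.mul_coe]
  push_cast
  field_simp

lemma exp_natCast_congr (n : ℕ+) (A B : ℕ)
    (h : (A : ZMod ((n : ℕ+) : ℕ)) = (B : ZMod ((n : ℕ+) : ℕ))) :
    Complex.exp (((2 * π * A / ((n : ℕ+) : ℕ) : ℝ) : ℂ) * Complex.I)
      = Complex.exp (((2 * π * B / ((n : ℕ+) : ℕ) : ℝ) : ℂ) * Complex.I) := by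
  rw [ZMod.natCast_eq_natCast_iff] at h
  obtain ⟨j, hj⟩ := Nat.modEq_iff_dvd.mp h
  have hn : ((((n : ℕ+) : ℕ) : ℝ)) ≠ 0 := by exact_mod_cast n.ne_zero
  have hB : (B : ℝ) = (A : ℝ) + (((n : ℕ+) : ℕ) : ℝ) * (j : ℝ) := by
    have : (B : ℤ) = (A : ℤ) + (((n : ℕ+) : ℕ) : ℤ) * j := by linarith [hj]
    exact_mod_cast congrArg (fun t : ℤ => (t : ℝ)) this
  have key : ((2 * π * B / ((n : ℕ+) : ℕ) : ℝ) : ℂ) * Complex.I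
      = ((2 * π * A / ((n : ℕ+) : ℕ) : ℝ) : ℂ) * Complex.I + (j : ℂ) * (2 * (π : ℂ) * Complex.I) := by
    have hnC : ((((n : ℕ+) : ℕ) : ℂ)) ≠ 0 := by exact_mod_cast n.ne_zero
    push_cast [hB]
    field_simp
  rw [key, Complex.exp_add, Complex.exp_int_mul_two_pi_mul_I, mul_one]

/-- The component at level `n` of the canonical map `ẑ → S¹_ℚ`,
`l ↦ e^{2πil/n}`. -/
def phiComp (a : Zhat) (n : ℕ+) : ℂ :=
  Complex.exp (((2 * π * ((a.1 n).val : ℕ) / ((n : ℕ+) : ℕ) : ℝ) : ℂ) * Complex.I)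

lemma phiComp_pow (a : Zhat) (n k : ℕ+) : phiComp a (n * k) ^ ((k : ℕ+) : ℕ) = phiComp a n := by
  unfold phiComp
  rw [exp_div_pow]
  haveI : NeZero (((n * k : ℕ+) : ℕ)) := ⟨(n * k).ne_zero⟩
  haveI : NeZero (((n : ℕ+) : ℕ)) := ⟨n.ne_zero⟩
  apply exp_natCast_congr
  have h := a.2 n k
  rw [ZMod.castHom_apply] at h
  rw [ZMod.natCast_val, ZMod.natCast_val, ZMod.cast_id, h]

/-- The adelic solenoid `S¹_ℚ`: the inverse limit of the circles
`S¹ = {z ∈ ℂ : ‖z‖ = 1}` under the covering maps `z ↦ z^{m/n}` for `n ∣ m`. -/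
def SolQ : Type :=
  {z : ℕ+ → ℂ // (∀ n, ‖z n‖ = 1) ∧ ∀ (n k : ℕ+), z (n * k) ^ ((k : ℕ+) : ℕ) = z n}

instance : TopologicalSpace SolQ := by unfold SolQ; infer_instance
instance : MeasurableSpace SolQ := borel _

instance : Mul SolQ :=
  ⟨fun x y => ⟨fun n => x.1 n * y.1 n,
    ⟨fun n => by rw [norm_mul, x.2.1 n, y.2.1 n, one_mul],
     fun n k => by rw [mul_pow, x.2.2 n k, y.2.2 n k]⟩⟩⟩

instance : One SolQ := ⟨⟨fun _ => 1, ⟨fun _ => norm_one, fun _ _ => one_pow _⟩⟩⟩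

/-- The canonical homomorphism `φ : ẑ → S¹_ℚ`, induced componentwise by
`l ↦ e^{2πil/n}`. -/
def phiS (a : Zhat) : SolQ :=
  ⟨fun n => phiComp a n, ⟨fun n => exp_real_mul_I_norm _, phiComp_pow a⟩⟩

/-- The baseleaf `ν : ℝ → S¹_ℚ`, `ν(t) = (e^{it/n})ₙ`. -/
def nuS (t : ℝ) : SolQ :=
  ⟨fun n => Complex.exp (((t / ((n : ℕ+) : ℕ) : ℝ) : ℂ) * Complex.I),
   ⟨fun n => exp_real_mul_I_norm _, fun n k => exp_div_pow t n k⟩⟩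

/-- `exp : ẑ × ℝ → S¹_ℚ`, `exp(a, θ) = φ(a)·ν(θ)`. -/
def expS (p : Zhat × ℝ) : SolQ := phiS p.1 * nuS p.2

/-- The algebraic solenoid `ℂ*_ℚ`: the inverse limit of copies of `ℂ* = ℂ \ {0}`
under the covering maps `z ↦ z^{m/n}` for `n ∣ m`. -/
def CSolQ : Type :=
  {z : ℕ+ → ℂ // (∀ n, z n ≠ 0) ∧ ∀ (n k : ℕ+), z (n * k) ^ ((k : ℕ+) : ℕ) = z n}

instance : TopologicalSpace CSolQ := by unfold CSolQ; infer_instance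
instance : MeasurableSpace CSolQ := borel _

instance : Mul CSolQ :=
  ⟨fun x y => ⟨fun n => x.1 n * y.1 n,
    ⟨fun n => mul_ne_zero (x.2.1 n) (y.2.1 n),
     fun n k => by rw [mul_pow, x.2.2 n k, y.2.2 n k]⟩⟩⟩

instance : One CSolQ := ⟨⟨fun _ => 1, ⟨fun _ => one_ne_zero, fun _ _ => one_pow _⟩⟩⟩

/-- The canonical homomorphism `φ : ẑ → ℂ*_ℚ`. -/
def phiC (a : Zhat) : CSolQ :=
  ⟨fun n => phiComp a n, ⟨fun n => Complex.exp_ne_zero _, phiComp_pow a⟩⟩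

/-- The baseleaf `ν : ℂ → ℂ*_ℚ`, `ν(z) = (e^{iz/n})ₙ`. -/
def nuC (z : ℂ) : CSolQ :=
  ⟨fun n => Complex.exp (Complex.I * z / (((n : ℕ+) : ℕ) : ℂ)),
   ⟨fun n => Complex.exp_ne_zero _, fun n k => exp_div_powC (Complex.I * z) n k⟩⟩

/-- `exp : ẑ × ℂ → ℂ*_ℚ`, `exp(a, z) = φ(a)·ν(z)`. -/
def expC (a : Zhat) (z : ℂ) : CSolQ := phiC a * nuC z

/-- The `n`-th power map on the Riemann sphere `Ĉ = ℂ ∪ {∞}`, with `∞ ↦ ∞`. -/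
def spherePow (k : ℕ) (x : OnePoint ℂ) : OnePoint ℂ :=
  Option.map (fun z : ℂ => z ^ k) x

/-- The adelic Riemann sphere `Ĉ_ℚ`: the inverse limit of Riemann spheres under
the branched covering maps `z ↦ z^{m/n}` for `n ∣ m`. -/
def SphereQ : Type :=
  {z : ℕ+ → OnePoint ℂ // ∀ (n k : ℕ+), spherePow ((k : ℕ+) : ℕ) (z (n * k)) = z n}

instance : TopologicalSpace SphereQ := by unfold SphereQ; infer_instance

/-- The leaf maps `exp(a, ·) : ℂ → ℂ*_ℚ ⊂ Ĉ_ℚ` of the adelic Riemann sphere. -/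
def expSph (a : Zhat) (z : ℂ) : SphereQ :=
  ⟨fun n => OnePoint.some (phiComp a n * Complex.exp (Complex.I * z / (((n : ℕ+) : ℕ) : ℂ))),
   fun n k => by
     show OnePoint.some ((phiComp a (n * k) * _) ^ ((k : ℕ+) : ℕ)) = _
     rw [mul_pow, phiComp_pow, exp_div_powC]⟩

/-- The renormalization operator `I_n` on functions on `ℂ*_ℚ`:
the average of `μ` over the fiber `π_n⁻¹(π_n(x))`, namely
`I_n(μ)(x) = ∫_{ẑ} μ(φ(n·a)·x) dη(a)`. -/
def Iren (η : Measure Zhat) (n : ℕ+) (f : CSolQ → ℂ) (x : CSolQ) : ℂ :=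
  ∫ a : Zhat, f (phiC (nsmulZ ((n : ℕ+) : ℕ) a) * x) ∂η

/-- The renormalization operator `I_n` on functions on `S¹_ℚ`. -/
def IrenS (η : Measure Zhat) (n : ℕ+) (f : SolQ → ℂ) (x : SolQ) : ℂ :=
  ∫ a : Zhat, f (phiS (nsmulZ ((n : ℕ+) : ℕ) a) * x) ∂η

/-- The character `χ_q = (π_n)^m : S¹_ℚ → S¹` associated to a rational `q = m/n`. -/
def chiQ (q : ℚ) (x : SolQ) : ℂ := (x.1 ⟨q.den, q.den_pos⟩) ^ q.num

/-- A function `f : ℝ → ℂ` is limit periodic if for every `ε > 0` there is a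
positive integer `N` such that `|f(x + 2πn) − f(x)| < ε` for all `x ∈ ℝ` and
all integers `n ∈ Nℤ`. -/
def LimitPeriodic (f : ℝ → ℂ) : Prop :=
  ∀ ε : ℝ, 0 < ε → ∃ N : ℕ+, ∀ x : ℝ, ∀ n : ℤ, ((N : ℕ+) : ℤ) ∣ n →
    ‖f (x + 2 * π * n) - f x‖ < ε

/-- A function `f : ℂ → ℂ` is limit periodic with respect to `x` if for every
`ε > 0` and compact `K ⊆ ℝ` there is a positive integer `N` with
`|f(z + 2πn) − f(z)| < ε` for all `z` with `Im z ∈ K` and all `n ∈ Nℤ`. -/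
def LimitPeriodicX (f : ℂ → ℂ) : Prop :=
  ∀ ε : ℝ, 0 < ε → ∀ K : Set ℝ, IsCompact K → ∃ N : ℕ+,
    ∀ z : ℂ, z.im ∈ K → ∀ n : ℤ, ((N : ℕ+) : ℤ) ∣ n →
      ‖f (z + 2 * π * n) - f z‖ < ε

/-!
If `x₁ = e^{iθ}`, then `x · ν(-θ)` lies in the kernel of `π₁`, whose `n`-th coordinates are
`n`-th roots of unity. The map `φ` is a homeomorphism of `ẑ` onto this kernel, continuous in
both directions because the `n`-th roots of unity form a finite discrete set. Hence any
continuous choice of angle `θ` over a part `S` of the circle trivializes `π₁` over `S` by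
`x ↦ (x₁, φ⁻¹(x · ν(-θ(x₁))))`. Over the circle slit at `-e^{it₀}`, the angle in
`(t₀ - π, t₀ + π)` is continuous, and precomposing the inverse trivialization with
`t ↦ e^{it}` recovers `exp`, which is therefore an open embedding on `ẑ × (t₀ - π, t₀ + π)`.
-/

instance (n : ℕ) : DiscreteTopology (ZMod n) := ⟨rfl⟩

namespace SolQ

@[ext]
theorem ext {x y : SolQ} (h : ∀ n, x.1 n = y.1 n) : x = y := Subtype.ext (funext h)

@[simp] theorem mul_apply (x y : SolQ) (n : ℕ+) : (x * y).1 n = x.1 n * y.1 n := rfl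

theorem apply_pow_self (x : SolQ) (n : ℕ+) : x.1 n ^ (n : ℕ) = x.1 1 := by
  simpa using x.2.2 1 n

theorem apply_pow_self_eq_one {x : SolQ} (hx : x.1 1 = 1) (n : ℕ+) : x.1 n ^ (n : ℕ) = 1 := by
  rw [apply_pow_self, hx]

theorem continuous_apply (n : ℕ+) : Continuous fun x : SolQ => x.1 n :=
  (_root_.continuous_apply n).comp continuous_subtype_val

theorem continuous_iff {X : Type*} [TopologicalSpace X] {f : X → SolQ} :
    Continuous f ↔ ∀ n, Continuous fun y => (f y).1 n :=
  (Topology.IsInducing.subtypeVal.continuous_iff).trans continuous_pi_iff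

instance : ContinuousMul SolQ :=
  ⟨continuous_iff.mpr fun n =>
    ((continuous_apply n).comp continuous_fst).mul ((continuous_apply n).comp continuous_snd)⟩

end SolQ

theorem phiComp_eq_toCircle (a : Zhat) (n : ℕ+) : phiComp a n = ZMod.toCircle (a.1 n) := by
  rw [phiComp, ZMod.toCircle_apply]
  push_cast
  ring_nf

theorem toCircle_castHom_pow {n k : ℕ+} (h : (n : ℕ) ∣ (n * k : ℕ+)) (c : ZMod (n * k : ℕ+)) :
    (ZMod.toCircle (ZMod.castHom h (ZMod n) c) : ℂ) = (ZMod.toCircle c : ℂ) ^ (k : ℕ) := by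
  rw [← ZMod.natCast_zmod_val c, map_natCast, ZMod.toCircle_natCast, ZMod.toCircle_natCast,
    ← Complex.exp_nat_mul]
  congr 1
  push_cast [PNat.mul_coe]
  field_simp

theorem exists_toCircle_eq {n : ℕ+} {r : ℂ} (hr : r ^ (n : ℕ) = 1) :
    ∃ c : ZMod n, (ZMod.toCircle c : ℂ) = r := by
  obtain ⟨i, -, rfl⟩ := (Complex.isPrimitiveRoot_exp n n.ne_zero).eq_pow_of_pow_eq_one hr
  refine ⟨i, ?_⟩
  rw [ZMod.toCircle_natCast, ← Complex.exp_nat_mul]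
  ring_nf

@[simp] theorem phiS_apply (a : Zhat) (n : ℕ+) : (phiS a).1 n = ZMod.toCircle (a.1 n) :=
  phiComp_eq_toCircle a n

@[simp] theorem nuS_apply (t : ℝ) (n : ℕ+) :
    (nuS t).1 n = Complex.exp ((t / (n : ℕ) : ℝ) * Complex.I) := rfl

theorem phiS_apply_one (a : Zhat) : (phiS a).1 1 = 1 := by
  have h : a.1 1 = 0 := Subsingleton.elim (α := ZMod 1) _ _
  rw [phiS_apply, h, AddChar.map_zero_eq_one, Circle.coe_one]

theorem nuS_apply_one (t : ℝ) : (nuS t).1 1 = Complex.exp (t * Complex.I) := by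
  simp

theorem continuous_phiS : Continuous phiS :=
  SolQ.continuous_iff.mpr fun n => by
    simp only [phiS_apply]
    exact (continuous_of_discreteTopology (f := fun c : ZMod n => (ZMod.toCircle c : ℂ))).comp
      ((_root_.continuous_apply n).comp continuous_subtype_val)

theorem continuous_nuS : Continuous nuS :=
  SolQ.continuous_iff.mpr fun n => by simp only [nuS_apply]; fun_prop

theorem mul_nuS_mul_nuS_neg (x : SolQ) (t : ℝ) : x * nuS t * nuS (-t) = x := by
  ext n
  simp [mul_assoc, ← Complex.exp_add, neg_div]

theorem mul_nuS_neg_mul_nuS (x : SolQ) (t : ℝ) : x * nuS (-t) * nuS t = x := by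
  simpa using mul_nuS_mul_nuS_neg x (-t)

theorem isClosedEmbedding_toCircle (n : ℕ+) :
    Topology.IsClosedEmbedding fun c : ZMod n => (ZMod.toCircle c : ℂ) :=
  continuous_of_discreteTopology.isClosedEmbedding
    (Subtype.coe_injective.comp ZMod.injective_toCircle)

/-- The inverse of `c ↦ e^{2πic/n}` on the `n`-th roots of unity (junk elsewhere). -/
def zmodLog (n : ℕ+) : ℂ → ZMod n := Function.invFun fun c : ZMod n => (ZMod.toCircle c : ℂ)

theorem toCircle_zmodLog {n : ℕ+} {r : ℂ} (hr : r ^ (n : ℕ) = 1) :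
    (ZMod.toCircle (zmodLog n r) : ℂ) = r :=
  Function.invFun_eq (exists_toCircle_eq hr)

theorem zmodLog_toCircle {n : ℕ+} (c : ZMod n) : zmodLog n (ZMod.toCircle c) = c :=
  Function.leftInverse_invFun (Subtype.coe_injective.comp ZMod.injective_toCircle) c

def zhatOfKer (x : {x : SolQ // x.1 1 = 1}) : Zhat :=
  ⟨fun n => zmodLog n (x.1.1 n), fun n k => by
    apply (isClosedEmbedding_toCircle n).injective
    dsimp only
    rw [toCircle_castHom_pow, toCircle_zmodLog (SolQ.apply_pow_self_eq_one x.2 _),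
      toCircle_zmodLog (SolQ.apply_pow_self_eq_one x.2 _), x.1.2.2]⟩

theorem continuous_zhatOfKer : Continuous zhatOfKer := by
  refine Topology.IsInducing.subtypeVal.continuous_iff.mpr (continuous_pi fun n => ?_)
  refine (isClosedEmbedding_toCircle n).isInducing.continuous_iff.mpr ?_
  refine ((SolQ.continuous_apply n).comp continuous_subtype_val).congr fun x => ?_
  exact (toCircle_zmodLog (SolQ.apply_pow_self_eq_one x.2 n)).symm

def phiHomeomorph : Zhat ≃ₜ {x : SolQ // x.1 1 = 1} where
  toFun a := ⟨phiS a, phiS_apply_one a⟩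
  invFun := zhatOfKer
  left_inv a := Subtype.ext (funext fun n => by simp [zhatOfKer, zmodLog_toCircle])
  right_inv x := Subtype.ext (SolQ.ext fun n =>
    (phiS_apply _ n).trans (toCircle_zmodLog (SolQ.apply_pow_self_eq_one x.2 n)))
  continuous_toFun := continuous_phiS.subtype_mk _
  continuous_invFun := continuous_zhatOfKer

theorem phiS_phiHomeomorph_symm (x : {x : SolQ // x.1 1 = 1}) :
    phiS (phiHomeomorph.symm x) = x.1 :=
  congrArg Subtype.val (phiHomeomorph.apply_symm_apply x)

theorem mul_nuS_neg_apply_one {x : SolQ} {t : ℝ} (h : Complex.exp (t * Complex.I) = x.1 1) :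
    (x * nuS (-t)).1 1 = 1 := by
  rw [SolQ.mul_apply, nuS_apply_one, ← h, ← Complex.exp_add]
  push_cast
  simp

theorem phiS_mul_nuS_apply_one (a : Zhat) (t : ℝ) :
    (phiS a * nuS t).1 1 = Complex.exp (t * Complex.I) := by
  rw [SolQ.mul_apply, phiS_apply_one, nuS_apply_one, one_mul]

def trivializationOfAngle (S : Set ℂ) (θ : ℂ → ℝ) (hθ : ContinuousOn θ S)
    (hexp : ∀ w ∈ S, Complex.exp (θ w * Complex.I) = w) :
    {x : SolQ // x.1 1 ∈ S} ≃ₜ S × Zhat where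
  toFun x := (⟨x.1.1 1, x.2⟩,
    phiHomeomorph.symm ⟨x.1 * nuS (-θ (x.1.1 1)), mul_nuS_neg_apply_one (hexp _ x.2)⟩)
  invFun p := ⟨phiS p.2 * nuS (θ p.1), by rw [phiS_mul_nuS_apply_one, hexp _ p.1.2]; exact p.1.2⟩
  left_inv x := Subtype.ext <| by
    simp only [phiS_phiHomeomorph_symm, mul_nuS_neg_mul_nuS]
  right_inv p := by
    have h1 : (phiS p.2 * nuS (θ p.1)).1 1 = p.1 := by rw [phiS_mul_nuS_apply_one, hexp _ p.1.2]
    refine Prod.ext (Subtype.ext h1) (phiHomeomorph.symm_apply_eq.mpr (Subtype.ext ?_))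
    simp only [h1, mul_nuS_mul_nuS_neg]
    rfl
  continuous_toFun := by
    have hθx : Continuous fun x : {x : SolQ // x.1 1 ∈ S} => θ (x.1.1 1) :=
      hθ.comp_continuous ((SolQ.continuous_apply 1).comp continuous_subtype_val) fun x => x.2
    refine ((SolQ.continuous_apply 1).comp continuous_subtype_val).subtype_mk _ |>.prodMk ?_
    exact phiHomeomorph.symm.continuous.comp
      ((continuous_subtype_val.mul (continuous_nuS.comp hθx.neg)).subtype_mk _)
  continuous_invFun :=
    ((continuous_phiS.comp continuous_snd).mul
      (continuous_nuS.comp (hθ.comp_continuous (continuous_subtype_val.comp continuous_fst)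
        fun p => p.1.2))).subtype_mk _

theorem arg_exp_mul_I_of_abs_lt {t : ℝ} (ht : |t| < π) : (Complex.exp (t * Complex.I)).arg = t := by
  rw [Complex.arg_exp_mul_I, toIocMod_eq_self]
  constructor <;> linarith [abs_lt.mp ht]

/-- The angle of `w` in `(t₀ - π, t₀ + π]`. -/
def angleNear (t₀ : ℝ) (w : ℂ) : ℝ := t₀ + (w / Complex.exp (t₀ * Complex.I)).arg

/-- The unit circle with the point `-e^{it₀}` removed. -/
def slitCircle (t₀ : ℝ) : Set ℂ :=
  {w | ‖w‖ = 1 ∧ w / Complex.exp (t₀ * Complex.I) ∈ Complex.slitPlane}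

theorem exp_arg_mul_I_of_norm_eq_one {w : ℂ} (hw : ‖w‖ = 1) :
    Complex.exp (w.arg * Complex.I) = w := by
  simpa [hw] using Complex.norm_mul_exp_arg_mul_I w

theorem exp_angleNear {t₀ : ℝ} {w : ℂ} (hw : ‖w‖ = 1) :
    Complex.exp (angleNear t₀ w * Complex.I) = w := by
  have hu : ‖w / Complex.exp (t₀ * Complex.I)‖ = 1 := by
    rw [norm_div, hw, Complex.norm_exp_ofReal_mul_I, div_one]
  rw [angleNear, Complex.ofReal_add, add_mul, Complex.exp_add, exp_arg_mul_I_of_norm_eq_one hu,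
    mul_div_cancel₀ _ (Complex.exp_ne_zero _)]

theorem exp_sub_div_exp (t t₀ : ℝ) :
    Complex.exp (t * Complex.I) / Complex.exp (t₀ * Complex.I) =
      Complex.exp ((t - t₀ : ℝ) * Complex.I) := by
  rw [← Complex.exp_sub]
  push_cast
  ring_nf

theorem angleNear_exp {t₀ t : ℝ} (ht : |t - t₀| < π) :
    angleNear t₀ (Complex.exp (t * Complex.I)) = t := by
  rw [angleNear, exp_sub_div_exp, arg_exp_mul_I_of_abs_lt ht]
  ring

theorem exp_mem_slitCircle {t₀ t : ℝ} (ht : |t - t₀| < π) :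
    Complex.exp (t * Complex.I) ∈ slitCircle t₀ := by
  refine ⟨Complex.norm_exp_ofReal_mul_I t, ?_⟩
  rw [exp_sub_div_exp, Complex.mem_slitPlane_iff_arg, arg_exp_mul_I_of_abs_lt ht]
  exact ⟨(lt_of_le_of_lt (le_abs_self _) ht).ne, Complex.exp_ne_zero _⟩

theorem abs_angleNear_sub_lt {t₀ : ℝ} {w : ℂ} (hw : w ∈ slitCircle t₀) :
    |angleNear t₀ w - t₀| < π := by
  rw [angleNear, add_sub_cancel_left, abs_lt]
  exact ⟨Complex.neg_pi_lt_arg _,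
    lt_of_le_of_ne (Complex.arg_le_pi _) (Complex.mem_slitPlane_iff_arg.mp hw.2).1⟩

theorem continuousOn_angleNear (t₀ : ℝ) : ContinuousOn (angleNear t₀) (slitCircle t₀) :=
  fun w hw => (continuousAt_const.add ((Complex.continuousAt_arg hw.2).comp
    (f := fun z : ℂ => z / Complex.exp (t₀ * Complex.I)) (x := w)
    (continuousAt_id.div_const _))).continuousWithinAt

theorem isOpen_preimage_slitCircle (t₀ : ℝ) : IsOpen {x : SolQ | x.1 1 ∈ slitCircle t₀} := by
  have h : {x : SolQ | x.1 1 ∈ slitCircle t₀} =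
      (fun x : SolQ => x.1 1 / Complex.exp (t₀ * Complex.I)) ⁻¹' Complex.slitPlane := by
    ext x
    exact and_iff_right (x.2.1 1)
  rw [h]
  exact Complex.isOpen_slitPlane.preimage ((SolQ.continuous_apply 1).div_const _)

def angleHomeomorph (t₀ : ℝ) : {t : ℝ // |t - t₀| < π} ≃ₜ slitCircle t₀ where
  toFun t := ⟨Complex.exp (t.1 * Complex.I), exp_mem_slitCircle t.2⟩
  invFun w := ⟨angleNear t₀ w, abs_angleNear_sub_lt w.2⟩
  left_inv t := Subtype.ext (angleNear_exp t.2)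
  right_inv w := Subtype.ext (exp_angleNear w.2.1)
  continuous_toFun := by fun_prop
  continuous_invFun :=
    ((continuousOn_angleNear t₀).comp_continuous continuous_subtype_val fun w => w.2).subtype_mk _

theorem isLocalHomeomorph_expS : IsLocalHomeomorph expS := by
  refine isLocalHomeomorph_iff_isOpenEmbedding_restrict.mpr fun p => ?_
  let U : Set (Zhat × ℝ) := Set.univ ×ˢ {t | |t - p.2| < π}
  let e : U ≃ₜ {x : SolQ // x.1 1 ∈ slitCircle p.2} :=
    (Homeomorph.Set.prod _ _).trans <|
      ((Homeomorph.Set.univ Zhat).prodCongr (angleHomeomorph p.2)).trans <|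
        (Homeomorph.prodComm _ _).trans <|
          (trivializationOfAngle _ _ (continuousOn_angleNear p.2)
            fun _ hw => exp_angleNear hw.1).symm
  have hU : U ∈ nhds p := prod_mem_nhds Filter.univ_mem <|
    (isOpen_lt (continuous_abs.comp (continuous_sub_right _)) continuous_const).mem_nhds
      (by simp [Real.pi_pos])
  have hexpS : U.domRestrict expS = Subtype.val ∘ e := funext fun q => by
    show expS q.1 = phiS q.1.1 * nuS (angleNear p.2 (Complex.exp (q.1.2 * Complex.I)))
    rw [angleNear_exp q.2.2]
    rfl
  exact ⟨U, hU, hexpS ▸ (isOpen_preimage_slitCircle p.2).isOpenEmbedding_subtypeVal.comp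
    e.isOpenEmbedding⟩

theorem arc_subset_slitCircle {t₀ L : ℝ} (hL : L ≤ 2 * π) :
    {w : ℂ | ∃ θ : ℝ, |θ - t₀| < L / 2 ∧ w = Complex.exp ((θ : ℂ) * Complex.I)} ⊆
      slitCircle t₀ := by
  rintro _ ⟨θ, hθ, rfl⟩
  exact exp_mem_slitCircle (by linarith)

/-- `exp : ẑ × ℝ → S¹_ℚ` is a local homeomorphism, and
`π₁ : S¹_ℚ → S¹` is a fiber bundle with fiber homeomorphic to `ẑ`; in particular
`π₁` admits local trivializations over every open arc of `S¹` of arclength `< 2π`. -/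
theorem statement2 :
    IsLocalHomeomorph expS ∧
    (∀ w : ℂ, ‖w‖ = 1 → Nonempty ({x : SolQ // x.1 1 = w} ≃ₜ Zhat)) ∧
    (∀ t₀ L : ℝ, 0 < L → L < 2 * π →
      ∃ h : {x : SolQ // x.1 1 ∈
          {w : ℂ | ∃ θ : ℝ, |θ - t₀| < L / 2 ∧ w = Complex.exp ((θ : ℂ) * Complex.I)}} ≃ₜ
        ({w : ℂ | ∃ θ : ℝ, |θ - t₀| < L / 2 ∧ w = Complex.exp ((θ : ℂ) * Complex.I)} × Zhat),
        ∀ x, ((h x).1 : ℂ) = x.1.1 1) := by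
  refine ⟨isLocalHomeomorph_expS, fun w hw => ?_, fun t₀ L _ hL => ?_⟩
  · obtain ⟨θ, hθ⟩ := (Complex.norm_eq_one_iff w).mp hw
    exact ⟨(trivializationOfAngle {w} (fun _ => θ) continuousOn_const fun _ h => h ▸ hθ).trans
      (Homeomorph.uniqueProd _ _)⟩
  · have hsub := arc_subset_slitCircle (t₀ := t₀) hL.le
    exact ⟨trivializationOfAngle _ _ ((continuousOn_angleNear t₀).mono hsub)
      (fun _ hw => exp_angleNear (hsub hw).1), fun _ => rfl⟩

end
end

section
/- Let g : ℂ → ℂ. There exists a continuous function f : ℂ*_ℚ → ℂ with f ∘ ν = g if and only if g is continuous and limit periodic with respect to x. Moreover, such f can be chosen leafwise holomorphic (i.e., f ∘ exp(a, ·) : ℂ → ℂ is holomorphic for every a ∈ ẑ) if and only if g is in addition holomorphic on ℂ. -/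
open Complex Real Filter MeasureTheory

noncomputable section

/-!
Every point of `ℂ*_ℚ` is some `exp(a, z)`; `exp(a, z) = exp(b, w)` exactly when `z = w + 2πk` and
`b = a + k` for some `k ∈ ℤ`, and `ν(z + 2πk) = exp(k, z)`.

If `f` is continuous, `F = f ∘ exp` is continuous on `ẑ × ℂ` and `g(z + 2πk) = F(k, z)`. By
compactness of `ẑ × (strip of width 2π)`, `F(b + s, w)` is uniformly close to `F(b, w)` for `s`
near `0` in `ẑ`, and the multiples of a suitable `N` are that close to `0`: this is limit
periodicity.

Conversely, for limit periodic `g` the functions `(a, z) ↦ g(z + 2π (a mod (j + 1)!))` converge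
locally uniformly on `ẑ × ℂ` to some `G`, which is continuous, holomorphic in `z` if `g` is, equal
to `g` at `a = 0`, and satisfies `G(a + k, z) = G(a, z + 2πk)`. So `G` descends to `f` on `ℂ*_ℚ`,
and `f` is continuous because every point of `ℂ*_ℚ` has a neighbourhood that is the image under
`exp` of a compact set `ẑ × (closed disc)`.
-/

open Topology Set

instance inst_s9 (n : ℕ) : DiscreteTopology (ZMod n) := ⟨rfl⟩

def fac (j : ℕ) : ℕ+ := ⟨(j + 1).factorial, (j + 1).factorial_pos⟩

lemma dvd_fac {N j : ℕ} (hN : 0 < N) (h : N ≤ j + 1) : N ∣ (fac j : ℕ) :=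
  Nat.dvd_factorial hN h

lemma fac_dvd_fac {j j' : ℕ} (h : j ≤ j') : (fac j : ℕ) ∣ (fac j' : ℕ) :=
  Nat.factorial_dvd_factorial (by omega)

namespace Zhat

lemma ext {a b : Zhat} (h : ∀ n, a.1 n = b.1 n) : a = b := Subtype.ext (funext h)

lemma add_apply (a b : Zhat) (n : ℕ+) : (a + b).1 n = a.1 n + b.1 n := rfl

lemma zero_apply (n : ℕ+) : (0 : Zhat).1 n = 0 := rfl

lemma add_zero (a : Zhat) : a + 0 = a := ext fun n => by simp [add_apply, zero_apply]

lemma zero_add (a : Zhat) : 0 + a = a := ext fun n => by simp [add_apply, zero_apply]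

lemma continuous_apply (n : ℕ+) : Continuous fun a : Zhat => a.1 n :=
  (_root_.continuous_apply n).comp continuous_subtype_val

instance : CompactSpace Zhat := by
  refine isCompact_iff_compactSpace.mp (IsClosed.isCompact ?_)
  show IsClosed {a : (n : ℕ+) → ZMod n | ∀ n k, _}
  simp only [Set.ofPred_forall]
  exact isClosed_iInter fun n => isClosed_iInter fun k =>
    isClosed_eq (continuous_of_discreteTopology.comp (_root_.continuous_apply (n * k)))
      (_root_.continuous_apply n)

lemma continuous_add : Continuous fun p : Zhat × Zhat => p.1 + p.2 :=
  continuous_induced_rng.2 <| continuous_pi fun n =>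
    (continuous_of_discreteTopology (f := fun q : ZMod n × ZMod n => q.1 + q.2)).comp
      ((continuous_apply n).prodMap (continuous_apply n))

lemma isEmbedding_val : IsEmbedding (Subtype.val : Zhat → (n : ℕ+) → ZMod n) :=
  IsEmbedding.subtypeVal

lemma tendsto_nhds_iff {ι : Type*} {l : Filter ι} {u : ι → Zhat} {a : Zhat} :
    Tendsto u l (𝓝 a) ↔ ∀ n : ℕ+, ∀ᶠ j in l, (u j).1 n = a.1 n := by
  refine isEmbedding_val.tendsto_nhds_iff.trans (tendsto_pi_nhds.trans ?_)
  simp only [nhds_discrete, tendsto_pure]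
  rfl

lemma natCast_val_of_dvd (a : Zhat) {n m : ℕ+} (h : (n : ℕ) ∣ m) :
    ((a.1 m).val : ZMod n) = a.1 n := by
  obtain ⟨k, rfl⟩ : ∃ k : ℕ+, m = n * k := by
    obtain ⟨c, hc⟩ := h
    have hc0 : 0 < c := Nat.pos_of_mul_pos_left (hc ▸ m.pos)
    exact ⟨⟨c, hc0⟩, PNat.eq hc⟩
  rw [ZMod.natCast_val, ← ZMod.castHom_apply (h := h), a.2 n k]

def rep (a : Zhat) (j : ℕ) : ℤ := (a.1 (fac j)).val

lemma rep_zero (j : ℕ) : (0 : Zhat).rep j = 0 := by simp [rep, zero_apply]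

lemma fac_dvd_rep_sub_rep (a : Zhat) {j j' : ℕ} (h : j ≤ j') :
    ((fac j : ℕ) : ℤ) ∣ a.rep j' - a.rep j := by
  rw [← ZMod.intCast_zmod_eq_zero_iff_dvd, Int.cast_sub, sub_eq_zero, rep, rep, Int.cast_natCast,
    Int.cast_natCast, a.natCast_val_of_dvd (fac_dvd_fac h), ZMod.natCast_zmod_val]

end Zhat

lemma iotaZ_add (k l : ℤ) : iotaZ (k + l) = iotaZ k + iotaZ l :=
  Zhat.ext fun _ => Int.cast_add k l

lemma iotaZ_apply (k : ℤ) (n : ℕ+) : (iotaZ k).1 n = k := rfl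

lemma Zhat.fac_dvd_rep_add_iotaZ_sub (a : Zhat) (k : ℤ) (j : ℕ) :
    ((fac j : ℕ) : ℤ) ∣ (a + iotaZ k).rep j - a.rep j - k := by
  rw [← ZMod.intCast_zmod_eq_zero_iff_dvd, Int.cast_sub, Int.cast_sub, Zhat.rep, Zhat.rep,
    Int.cast_natCast, Int.cast_natCast, ZMod.natCast_zmod_val, ZMod.natCast_zmod_val,
    Zhat.add_apply, iotaZ_apply]
  ring

lemma tendsto_iotaZ_zero {n : ℕ → ℤ} (hn : ∀ j, ((fac j : ℕ) : ℤ) ∣ n j) :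
    Tendsto (fun j => iotaZ (n j)) atTop (𝓝 0) := by
  refine Zhat.tendsto_nhds_iff.2 fun c => ?_
  filter_upwards [eventually_ge_atTop (c : ℕ)] with j hj
  rw [iotaZ_apply, Zhat.zero_apply, ZMod.intCast_zmod_eq_zero_iff_dvd]
  exact (Int.natCast_dvd_natCast.2 (dvd_fac c.pos (by omega))).trans (hn j)

lemma Zhat.exists_forall_iotaZ_mem {U : Set Zhat} (hU : U ∈ 𝓝 0) :
    ∃ N : ℕ+, ∀ n : ℤ, (N : ℤ) ∣ n → iotaZ n ∈ U := by
  by_contra! h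
  choose n hdvd hn using fun j => h (fac j)
  obtain ⟨j, hj⟩ := ((tendsto_iotaZ_zero hdvd).eventually hU).exists
  exact hn j hj

lemma ZMod.exists_stdAddChar_eq {n : ℕ} [NeZero n] {ζ : ℂ} (h : ζ ^ n = 1) :
    ∃ c : ZMod n, ZMod.stdAddChar c = ζ := by
  obtain ⟨i, -, rfl⟩ := (isPrimitiveRoot_exp n (NeZero.ne n)).eq_pow_of_pow_eq_one h
  refine ⟨i, ?_⟩
  rw [← Int.cast_natCast, ZMod.stdAddChar_coe, ← Complex.exp_nat_mul]
  congr 1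
  push_cast
  ring

lemma ZMod.stdAddChar_cast_eq_pow (n k : ℕ+) (c : ZMod ((n * k : ℕ+) : ℕ)) :
    ZMod.stdAddChar (c.cast : ZMod n) = ZMod.stdAddChar c ^ (k : ℕ) := by
  obtain ⟨j, rfl⟩ := ZMod.intCast_surjective c
  rw [ZMod.cast_intCast (show (n : ℕ) ∣ ((n * k : ℕ+) : ℕ) from dvd_mul_right _ _),
    ZMod.stdAddChar_coe, ZMod.stdAddChar_coe, ← Complex.exp_nat_mul]
  congr 1
  have : (k : ℂ) ≠ 0 := NeZero.ne _
  push_cast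
  field_simp

lemma phiComp_eq_stdAddChar (a : Zhat) (n : ℕ+) : phiComp a n = ZMod.stdAddChar (a.1 n) := by
  rw [phiComp, ZMod.stdAddChar_apply, ZMod.toCircle_apply]
  push_cast
  ring_nf

namespace CSolQ

lemma ext {x y : CSolQ} (h : ∀ n, x.1 n = y.1 n) : x = y := Subtype.ext (funext h)

lemma isEmbedding_val : IsEmbedding (Subtype.val : CSolQ → ℕ+ → ℂ) := IsEmbedding.subtypeVal

instance : T2Space CSolQ := isEmbedding_val.t2Space

lemma continuous_apply (n : ℕ+) : Continuous fun x : CSolQ => x.1 n :=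
  (_root_.continuous_apply n).comp continuous_subtype_val

end CSolQ

lemma expC_apply (a : Zhat) (z : ℂ) (n : ℕ+) :
    (expC a z).1 n = ZMod.stdAddChar (a.1 n) * exp (I * z / (n : ℕ)) := by
  rw [← phiComp_eq_stdAddChar]
  rfl

lemma expC_zero (z : ℂ) : expC 0 z = nuC z :=
  CSolQ.ext fun n => by rw [expC_apply, Zhat.zero_apply, AddChar.map_zero_eq_one, one_mul]; rfl

lemma expC_add_iotaZ (a : Zhat) (z : ℂ) (k : ℤ) :
    expC (a + iotaZ k) z = expC a (z + 2 * π * k) := CSolQ.ext fun n => by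
  have hn : ((n : ℕ) : ℂ) ≠ 0 := NeZero.ne _
  rw [expC_apply, expC_apply, Zhat.add_apply, iotaZ_apply, AddChar.map_add_eq_mul,
    ZMod.stdAddChar_coe, mul_assoc, ← Complex.exp_add]
  congr 2
  field_simp
  ring

lemma nuC_add_two_pi_mul_intCast (z : ℂ) (k : ℤ) : nuC (z + 2 * π * k) = expC (iotaZ k) z := by
  rw [← expC_zero, ← expC_add_iotaZ, Zhat.zero_add]

lemma expC_injective_left {a b : Zhat} {z : ℂ} (h : expC a z = expC b z) : a = b := by
  refine Zhat.ext fun n => ZMod.injective_stdAddChar ?_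
  have hn := congrArg (fun x : CSolQ => x.1 n) h
  simp only [expC_apply] at hn
  exact mul_right_cancel₀ (Complex.exp_ne_zero _) hn

lemma expC_apply_one (a : Zhat) (z : ℂ) : (expC a z).1 1 = exp (I * z) := by
  have h0 : a.1 1 = 0 := Subsingleton.elim (α := ZMod 1) _ _
  rw [expC_apply, h0, AddChar.map_zero_eq_one, one_mul]
  simp

lemma exists_of_expC_eq {a b : Zhat} {z w : ℂ} (h : expC a z = expC b w) :
    ∃ k : ℤ, z = w + 2 * π * k ∧ b = a + iotaZ k := by
  have h1 := congrArg (fun x : CSolQ => x.1 1) h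
  simp only [expC_apply_one] at h1
  obtain ⟨k, hk⟩ := Complex.exp_eq_exp_iff_exists_int.1 h1
  have hz : z = w + 2 * π * k := mul_left_cancel₀ I_ne_zero (by rw [hk]; ring)
  refine ⟨k, hz, expC_injective_left (z := w) ?_⟩
  rw [← h, hz, expC_add_iotaZ]

lemma exists_expC_eq (x : CSolQ) {z : ℂ} (hz : exp (I * z) = x.1 1) : ∃ a, expC a z = x := by
  have hroot : ∀ n : ℕ+, (x.1 n / exp (I * z / (n : ℕ))) ^ (n : ℕ) = 1 := fun n => by
    have hx : x.1 n ^ (n : ℕ) = x.1 1 := by simpa using x.2.2 1 n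
    have he : exp (I * z / (n : ℕ)) ^ (n : ℕ) = exp (I * z) := by
      simpa using exp_div_powC (I * z) 1 n
    rw [div_pow, hx, he, hz, div_self (x.2.1 1)]
  choose c hc using fun n => ZMod.exists_stdAddChar_eq (hroot n)
  have hcompat : ∀ n k : ℕ+, ZMod.castHom (show (n : ℕ) ∣ ((n * k : ℕ+) : ℕ) from
      dvd_mul_right _ _) (ZMod n) (c (n * k)) = c n := fun n k => by
    refine ZMod.injective_stdAddChar ?_
    rw [ZMod.castHom_apply, ZMod.stdAddChar_cast_eq_pow n k (c (n * k)), hc, hc, div_pow,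
      x.2.2, exp_div_powC]
  let a : Zhat := ⟨c, hcompat⟩
  refine ⟨a, CSolQ.ext fun n => ?_⟩
  rw [expC_apply, show a.1 n = c n from rfl, hc, div_mul_cancel₀ _ (Complex.exp_ne_zero _)]

lemma Complex.norm_log_le (z : ℂ) : ‖log z‖ ≤ |Real.log ‖z‖| + π := by
  calc ‖log z‖ ≤ |(log z).re| + |(log z).im| := norm_le_abs_re_add_abs_im _
    _ ≤ |Real.log ‖z‖| + π := by rw [log_re, log_im]; gcongr; exact abs_arg_le_pi z

lemma exists_expC_eq_norm_le (x : CSolQ) :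
    ∃ a z, expC a z = x ∧ ‖z‖ ≤ |Real.log ‖x.1 1‖| + π := by
  have hz : exp (I * (-I * log (x.1 1))) = x.1 1 := by
    rw [← mul_assoc, mul_neg, I_mul_I, neg_neg, one_mul, exp_log (x.2.1 1)]
  obtain ⟨a, ha⟩ := exists_expC_eq x hz
  refine ⟨a, _, ha, ?_⟩
  rw [norm_mul, norm_neg, norm_I, one_mul]
  exact Complex.norm_log_le _

lemma continuous_expC : Continuous fun p : Zhat × ℂ => expC p.1 p.2 := by
  refine continuous_induced_rng.2 (continuous_pi fun n => ?_)
  show Continuous fun p : Zhat × ℂ => (expC p.1 p.2).1 n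
  simp only [expC_apply]
  exact ((continuous_of_discreteTopology (f := fun c : ZMod n => ZMod.stdAddChar c)).comp
    ((Zhat.continuous_apply n).comp continuous_fst)).mul (by fun_prop)

lemma continuous_nuC : Continuous nuC :=
  continuous_induced_rng.2 <| continuous_pi fun n =>
    show Continuous fun z : ℂ => exp (I * z / (n : ℕ)) by fun_prop

lemma exists_forall_norm_sub_lt_of_continuous {Y E : Type*} [TopologicalSpace Y]
    [SeminormedAddCommGroup E] {F : Zhat × Y → E} (hF : Continuous F) {C : Set Y}
    (hC : IsCompact C) {ε : ℝ} (hε : 0 < ε) :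
    ∃ N : ℕ+, ∀ n : ℤ, (N : ℤ) ∣ n → ∀ b, ∀ w ∈ C, ‖F (b + iotaZ n, w) - F (b, w)‖ < ε := by
  have hcont : ContinuousOn (Function.uncurry fun (s : Zhat) (p : Zhat × Y) => F (p.1 + s, p.2))
      (univ ×ˢ (univ ×ˢ C)) :=
    (hF.comp ((Zhat.continuous_add.comp ((continuous_fst.comp continuous_snd).prodMk
      continuous_fst)).prodMk (continuous_snd.comp continuous_snd))).continuousOn
  obtain ⟨V, hV, hVε⟩ := (isCompact_univ.prod hC).mem_uniformity_of_prod hcont (mem_univ 0)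
    (Metric.dist_mem_uniformity hε)
  rw [nhdsWithin_univ] at hV
  obtain ⟨N, hN⟩ := Zhat.exists_forall_iotaZ_mem hV
  refine ⟨N, fun n hn b w hw => ?_⟩
  simpa [Zhat.add_zero, dist_eq_norm] using hVε _ (hN n hn) (b, w) ⟨trivial, hw⟩

lemma limitPeriodicX_comp_nuC {f : CSolQ → ℂ} (hf : Continuous f) :
    LimitPeriodicX fun z => f (nuC z) := by
  intro ε hε K hK
  obtain ⟨N, hN⟩ := exists_forall_norm_sub_lt_of_continuous (hf.comp continuous_expC)
    ((isCompact_Icc (a := 0) (b := 2 * π)).reProdIm hK) hε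
  refine ⟨N, fun z hz n hn => ?_⟩
  obtain ⟨m, hm, -⟩ := existsUnique_sub_zsmul_mem_Ico Real.two_pi_pos z.re 0
  set w := z - 2 * π * m
  have hw : w ∈ Icc 0 (2 * π) ×ℂ K := by
    refine ⟨Ico_subset_Icc_self ?_, by simpa [w] using hz⟩
    simpa [w, zsmul_eq_mul, mul_comm] using hm
  have hz : z = w + 2 * π * m := by ring
  have hzn : z + 2 * π * n = w + 2 * π * ((m + n : ℤ) : ℂ) := by
    rw [hz]
    push_cast
    ring
  have h := hN n hn (iotaZ m) w hw
  rwa [Function.comp_apply, Function.comp_apply, ← iotaZ_add, ← nuC_add_two_pi_mul_intCast,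
    ← nuC_add_two_pi_mul_intCast, ← hzn, ← hz] at h

lemma LimitPeriodicX.exists_fac {g : ℂ → ℂ} (hg : LimitPeriodicX g) {ε : ℝ} (hε : 0 < ε)
    {K : Set ℝ} (hK : IsCompact K) :
    ∃ N : ℕ, ∀ j ≥ N, ∀ z : ℂ, z.im ∈ K → ∀ d : ℤ, ((fac j : ℕ) : ℤ) ∣ d →
      ‖g (z + 2 * π * d) - g z‖ < ε := by
  obtain ⟨N, hN⟩ := hg ε hε K hK
  exact ⟨N, fun j hj z hz d hd =>
    hN z hz d ((Int.natCast_dvd_natCast.2 (dvd_fac N.pos (by omega))).trans hd)⟩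

def leafApprox (g : ℂ → ℂ) (j : ℕ) (p : Zhat × ℂ) : ℂ := g (p.2 + 2 * π * p.1.rep j)

def leafLimit (g : ℂ → ℂ) (p : Zhat × ℂ) : ℂ := limUnder atTop fun j => leafApprox g j p

lemma LimitPeriodicX.uniformCauchySeqOn_leafApprox {g : ℂ → ℂ} (hg : LimitPeriodicX g)
    {K : Set ℝ} (hK : IsCompact K) :
    UniformCauchySeqOn (leafApprox g) atTop {p | p.2.im ∈ K} := by
  rw [Metric.uniformCauchySeqOn_iff]
  intro ε hε
  obtain ⟨N, hN⟩ := hg.exists_fac (half_pos hε) hK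
  have close : ∀ j ≥ N, ∀ p : Zhat × ℂ, p.2.im ∈ K →
      dist (leafApprox g j p) (leafApprox g N p) < ε / 2 := fun j hj p hp => by
    have h := hN N le_rfl (p.2 + 2 * π * p.1.rep N) (by simpa using hp) _
      (p.1.fac_dvd_rep_sub_rep hj)
    have harg : p.2 + 2 * π * p.1.rep j
        = p.2 + 2 * π * p.1.rep N + 2 * π * ((p.1.rep j - p.1.rep N : ℤ) : ℂ) := by
      push_cast
      ring
    rwa [dist_eq_norm, leafApprox, leafApprox, harg]
  exact ⟨N, fun m hm n hn p hp => by
    linarith [dist_triangle_right (leafApprox g m p) (leafApprox g n p) (leafApprox g N p),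
      close m hm p hp, close n hn p hp]⟩

lemma LimitPeriodicX.tendsto_leafApprox {g : ℂ → ℂ} (hg : LimitPeriodicX g) (p : Zhat × ℂ) :
    Tendsto (fun j => leafApprox g j p) atTop (𝓝 (leafLimit g p)) :=
  ((hg.uniformCauchySeqOn_leafApprox isCompact_singleton).cauchySeq
    (mem_singleton p.2.im)).tendsto_limUnder

lemma LimitPeriodicX.tendstoLocallyUniformly_leafApprox {g : ℂ → ℂ} (hg : LimitPeriodicX g) :
    TendstoLocallyUniformly (leafApprox g) (leafLimit g) atTop := by
  refine tendstoLocallyUniformly_of_forall_exists_nhds fun p =>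
    ⟨{q | q.2.im ∈ Metric.closedBall p.2.im 1}, ?_, ?_⟩
  · exact (continuous_im.comp continuous_snd).continuousAt.preimage_mem_nhds
      (Metric.closedBall_mem_nhds _ one_pos)
  · exact (hg.uniformCauchySeqOn_leafApprox (isCompact_closedBall p.2.im 1)
      ).tendstoUniformlyOn_of_tendsto fun q _ => hg.tendsto_leafApprox q

lemma continuous_leafApprox {g : ℂ → ℂ} (hgc : Continuous g) (j : ℕ) :
    Continuous (leafApprox g j) := by
  have hrep : Continuous fun p : Zhat × ℂ => (2 * π * p.1.rep j : ℂ) :=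
    (continuous_of_discreteTopology (f := fun c : ZMod (fac j) => (2 * π * (c.val : ℤ) : ℂ))).comp
      ((Zhat.continuous_apply _).comp continuous_fst)
  exact hgc.comp (continuous_snd.add hrep)

lemma LimitPeriodicX.continuous_leafLimit {g : ℂ → ℂ} (hg : LimitPeriodicX g)
    (hgc : Continuous g) : Continuous (leafLimit g) :=
  hg.tendstoLocallyUniformly_leafApprox.continuous
    (Frequently.of_forall (continuous_leafApprox hgc))

lemma LimitPeriodicX.differentiable_leafLimit {g : ℂ → ℂ} (hg : LimitPeriodicX g)
    (hgd : Differentiable ℂ g) (a : Zhat) : Differentiable ℂ fun z => leafLimit g (a, z) := by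
  rw [← differentiableOn_univ]
  refine ((hg.tendstoLocallyUniformly_leafApprox.comp _ (continuous_const.prodMk continuous_id)
    ).tendstoLocallyUniformlyOn).differentiableOn (Eventually.of_forall fun j => ?_) isOpen_univ
  exact show DifferentiableOn ℂ (fun z => g (z + 2 * π * a.rep j)) univ from
    (hgd.comp (differentiable_id.add_const _)).differentiableOn

lemma leafLimit_zero (g : ℂ → ℂ) (z : ℂ) : leafLimit g (0, z) = g z := by
  have : (fun j => leafApprox g j (0, z)) = fun _ => g z := by
    funext j
    simp [leafApprox, Zhat.rep_zero]
  rw [leafLimit, this, tendsto_const_nhds.limUnder_eq]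

lemma LimitPeriodicX.leafLimit_add_iotaZ {g : ℂ → ℂ} (hg : LimitPeriodicX g) (a : Zhat) (z : ℂ)
    (k : ℤ) : leafLimit g (a + iotaZ k, z) = leafLimit g (a, z + 2 * π * k) := by
  have hdiff : Tendsto (fun j => leafApprox g j (a + iotaZ k, z)
      - leafApprox g j (a, z + 2 * π * k)) atTop (𝓝 0) := by
    rw [Metric.tendsto_atTop]
    intro ε hε
    obtain ⟨N, hN⟩ := hg.exists_fac hε (isCompact_singleton (x := z.im))
    refine ⟨N, fun j hj => ?_⟩
    have h := hN j hj (z + 2 * π * k + 2 * π * a.rep j) (by simp) _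
      (a.fac_dvd_rep_add_iotaZ_sub k j)
    have harg : z + 2 * π * (a + iotaZ k).rep j = z + 2 * π * k + 2 * π * a.rep j
        + 2 * π * (((a + iotaZ k).rep j - a.rep j - k : ℤ) : ℂ) := by
      push_cast
      ring
    rwa [dist_zero_right, leafApprox, leafApprox, harg]
  have hlim := (hg.tendsto_leafApprox (a + iotaZ k, z)).sub
    (hg.tendsto_leafApprox (a, z + 2 * π * k))
  exact sub_eq_zero.1 (tendsto_nhds_unique hlim hdiff)

theorem continuous_of_continuous_comp_of_isCompact_image_mem_nhds {X Y Z : Type*}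
    [TopologicalSpace X] [T2Space X] [TopologicalSpace Y] [TopologicalSpace Z] {p : Y → X}
    {f : X → Z} (hp : Continuous p) (hfp : Continuous (f ∘ p))
    (hloc : ∀ x, ∃ L : Set Y, IsCompact L ∧ p '' L ∈ 𝓝 x) : Continuous f := by
  refine continuous_iff_continuousAt.2 fun x => ?_
  obtain ⟨L, hL, hLx⟩ := hloc x
  refine ContinuousOn.continuousAt ?_ hLx
  refine continuousOn_iff_isClosed.2 fun t ht =>
    ⟨p '' (L ∩ (f ∘ p) ⁻¹' t), ((hL.inter_right (ht.preimage hfp)).image hp).isClosed, ?_⟩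
  ext x
  constructor
  · rintro ⟨hx, y, hy, rfl⟩
    exact ⟨⟨y, ⟨hy, hx⟩, rfl⟩, y, hy, rfl⟩
  · rintro ⟨⟨y, ⟨-, hy⟩, rfl⟩, hx⟩
    exact ⟨hy, hx⟩

lemma expC_surjective : Function.Surjective fun p : Zhat × ℂ => expC p.1 p.2 := fun x =>
  let ⟨a, z, h, _⟩ := exists_expC_eq_norm_le x
  ⟨(a, z), h⟩

lemma exists_isCompact_image_expC_mem_nhds (x : CSolQ) :
    ∃ L : Set (Zhat × ℂ), IsCompact L ∧ (fun p : Zhat × ℂ => expC p.1 p.2) '' L ∈ 𝓝 x := by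
  set R := |Real.log ‖x.1 1‖| + π + 1
  refine ⟨univ ×ˢ Metric.closedBall 0 R, isCompact_univ.prod (isCompact_closedBall 0 R),
    Filter.mem_of_superset (x := {y : CSolQ | |Real.log ‖y.1 1‖| < R - π}) ?_ ?_⟩
  · have hlog : Continuous fun y : CSolQ => Real.log ‖y.1 1‖ :=
      (CSolQ.continuous_apply 1).norm.log fun y => norm_ne_zero_iff.2 (y.2.1 1)
    exact (isOpen_lt hlog.abs continuous_const).mem_nhds (by simp only [mem_ofPred_eq, R]; linarith)
  · intro y hy
    obtain ⟨a, z, h, hz⟩ := exists_expC_eq_norm_le y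
    simp only [mem_ofPred_eq] at hy
    exact ⟨(a, z), ⟨trivial, mem_closedBall_zero_iff.2 (by linarith)⟩, h⟩

/-- Independent of the chosen leaf coordinates, by `exists_of_expC_eq` and
`LimitPeriodicX.leafLimit_add_iotaZ`. -/
def solenoidExtension (g : ℂ → ℂ) (x : CSolQ) : ℂ :=
  leafLimit g (Function.surjInv expC_surjective x)

lemma LimitPeriodicX.solenoidExtension_expC {g : ℂ → ℂ} (hg : LimitPeriodicX g) (a : Zhat)
    (z : ℂ) : solenoidExtension g (expC a z) = leafLimit g (a, z) := by
  obtain ⟨k, hz, ha⟩ := exists_of_expC_eq (Function.surjInv_eq expC_surjective (expC a z))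
  rw [solenoidExtension]
  generalize Function.surjInv expC_surjective (expC a z) = q at hz ha ⊢
  rw [ha, hg.leafLimit_add_iotaZ, ← hz]

lemma LimitPeriodicX.solenoidExtension_nuC {g : ℂ → ℂ} (hg : LimitPeriodicX g) (z : ℂ) :
    solenoidExtension g (nuC z) = g z := by
  rw [← expC_zero, hg.solenoidExtension_expC, leafLimit_zero]

lemma LimitPeriodicX.continuous_solenoidExtension {g : ℂ → ℂ} (hg : LimitPeriodicX g)
    (hgc : Continuous g) : Continuous (solenoidExtension g) :=
  continuous_of_continuous_comp_of_isCompact_image_mem_nhds continuous_expC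
    (by simpa only [Function.comp_def, hg.solenoidExtension_expC] using hg.continuous_leafLimit hgc)
    exists_isCompact_image_expC_mem_nhds

/-- Given `g : ℂ → ℂ`, there is a continuous function
`f : ℂ*_ℚ → ℂ` with `f ∘ ν = g` iff `g` is continuous and limit periodic with
respect to `x`; and such an `f` can be chosen leafwise holomorphic iff `g` is in
addition holomorphic on `ℂ`. -/
theorem statement9 (g : ℂ → ℂ) :
    ((∃ f : CSolQ → ℂ, Continuous f ∧ ∀ z : ℂ, f (nuC z) = g z) ↔
      (Continuous g ∧ LimitPeriodicX g)) ∧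
    ((∃ f : CSolQ → ℂ, Continuous f ∧ (∀ z : ℂ, f (nuC z) = g z) ∧
        ∀ a : Zhat, Differentiable ℂ fun z : ℂ => f (expC a z)) ↔
      (Continuous g ∧ LimitPeriodicX g ∧ Differentiable ℂ g)) := by
  have necessary : ∀ f : CSolQ → ℂ, Continuous f → (∀ z, f (nuC z) = g z) →
      Continuous g ∧ LimitPeriodicX g := by
    intro f hf hfg
    obtain rfl : (fun z => f (nuC z)) = g := funext hfg
    exact ⟨hf.comp continuous_nuC, limitPeriodicX_comp_nuC hf⟩
  refine ⟨⟨fun ⟨f, hf, hfg⟩ => necessary f hf hfg, fun ⟨hgc, hg⟩ =>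
    ⟨solenoidExtension g, hg.continuous_solenoidExtension hgc, hg.solenoidExtension_nuC⟩⟩, ?_, ?_⟩
  · rintro ⟨f, hf, hfg, hhol⟩
    refine ⟨(necessary f hf hfg).1, (necessary f hf hfg).2, ?_⟩
    simpa only [expC_zero, hfg] using hhol 0
  · rintro ⟨hgc, hg, hgd⟩
    refine ⟨solenoidExtension g, hg.continuous_solenoidExtension hgc, hg.solenoidExtension_nuC,
      fun a => ?_⟩
    simpa only [hg.solenoidExtension_expC] using hg.differentiable_leafLimit hgd a
end
end
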